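/- With the Yule model setup, E[(U^{(n)} − τ^{(n)})^2] = ((4n+2)/(n-1)) H_{n,2} − 2H_{n,1}^2/(n-1) − 4H_{n,1}/(n-1). -/

import Mathlib

/-!
Because `κ ≤ n`, the shared path length is `U - τ = T₁ + ⋯ + T_κ`. Conditioning on `κ`, which is
independent of the `Tᵢ`, the second moment becomes `∑ₖ P(κ = k) E[(T₁ + ⋯ + T_k)²]`, and
`E[(T₁ + ⋯ + T_k)²] = H_{k,1}² + H_{k,2}` because the `Tᵢ` are independent with mean `1/i` and
variance `1/i²`. Weighted by `P(κ = k) ∝ 1/((k+1)(k+2))`, these harmonic sums add up to the closed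
form, which is checked by induction on `n`.
-/

open MeasureTheory ProbabilityTheory Finset Real

lemma expMeasure_eq_withDensity (r : ℝ) :
    expMeasure r = volume.withDensity fun x => ((exponentialPDFReal r x).toNNReal : ENNReal) :=
  rfl

lemma exponentialPDFReal_toNNReal_smul {r : ℝ} (hr : 0 ≤ r) (g : ℝ → ℝ) :
    (fun x => (exponentialPDFReal r x).toNNReal • g x)
      = (Set.Ici 0).indicator fun x => r * rexp (-(r * x)) * g x := by
  ext x
  by_cases hx : 0 ≤ x
  · simp [exponentialPDFReal, gammaPDFReal, hx, NNReal.smul_def, mul_nonneg hr (exp_pos _).le]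
  · simp [exponentialPDFReal, gammaPDFReal, hx]

lemma integrable_pow_expMeasure {r : ℝ} (hr : 0 < r) (m : ℕ) :
    Integrable (fun x : ℝ => x ^ m) (expMeasure r) := by
  rw [expMeasure_eq_withDensity, integrable_withDensity_iff_integrable_smul
      (measurable_exponentialPDFReal r).real_toNNReal, exponentialPDFReal_toNNReal_smul hr.le,
    integrable_indicator_iff measurableSet_Ici, integrableOn_Ici_iff_integrableOn_Ioi]
  refine IntegrableOn.congr_fun ((integrableOn_rpow_mul_exp_neg_mul_rpow (p := 1) (s := m)
    (neg_one_lt_zero.trans_le m.cast_nonneg) one_pos hr).const_mul r)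
    (fun x _ => ?_) measurableSet_Ioi
  simp only [rpow_one, rpow_natCast, neg_mul]
  ring

lemma integral_pow_expMeasure {r : ℝ} (hr : 0 < r) (m : ℕ) :
    ∫ x, x ^ m ∂expMeasure r = m.factorial / r ^ m := by
  rw [expMeasure_eq_withDensity, integral_withDensity_eq_integral_smul
      (measurable_exponentialPDFReal r).real_toNNReal, exponentialPDFReal_toNNReal_smul hr.le,
    integral_indicator measurableSet_Ici, integral_Ici_eq_integral_Ioi]
  have hGamma := integral_rpow_mul_exp_neg_mul_Ioi (a := m + 1) (by positivity) hr
  rw [add_sub_cancel_right, Gamma_nat_eq_factorial] at hGamma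
  calc ∫ x in Set.Ioi 0, r * rexp (-(r * x)) * x ^ m
      = r * ∫ x in Set.Ioi 0, x ^ (m : ℝ) * rexp (-(r * x)) := by
        rw [← integral_const_mul]
        refine setIntegral_congr_fun measurableSet_Ioi fun x _ => ?_
        simp only [rpow_natCast]
        ring
    _ = m.factorial / r ^ m := by
        rw [hGamma, ← Nat.cast_succ, rpow_natCast, one_div, inv_pow, pow_succ]
        field_simp

lemma memLp_id_expMeasure {r : ℝ} (hr : 0 < r) : MemLp id 2 (expMeasure r) :=
  (memLp_two_iff_integrable_sq aestronglyMeasurable_id).2 (integrable_pow_expMeasure hr 2)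

lemma integral_id_expMeasure {r : ℝ} (hr : 0 < r) : ∫ x, x ∂expMeasure r = r⁻¹ := by
  simpa using integral_pow_expMeasure hr 1

lemma variance_id_expMeasure {r : ℝ} (hr : 0 < r) : Var[id; expMeasure r] = (r ^ 2)⁻¹ := by
  have := isProbabilityMeasure_expMeasure hr
  have hsecond := integral_pow_expMeasure hr 2
  rw [variance_eq_sub (memLp_id_expMeasure hr)]
  simp only [Pi.pow_apply, id_eq] at hsecond ⊢
  rw [hsecond, integral_id_expMeasure hr]
  norm_num
  ring

lemma ProbabilityTheory.HasLaw.memLp_iff {Ω : Type*} [MeasurableSpace Ω] {P : Measure Ω}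
    {μ : Measure ℝ} {X : Ω → ℝ} (hX : HasLaw X μ P) {p : ENNReal} :
    MemLp X p P ↔ MemLp id p μ := by
  rw [← hX.map_eq, memLp_map_measure_iff aestronglyMeasurable_id hX.aemeasurable]
  rfl

section Independence

variable {Ω : Type*} [MeasurableSpace Ω] {P : Measure Ω}

lemma integral_sq_sum_of_pairwise_indepFun {ι : Type*} [IsProbabilityMeasure P]
    {X : ι → Ω → ℝ} {s : Finset ι} (hX : ∀ i ∈ s, MemLp (X i) 2 P)
    (hindep : Set.Pairwise ↑s fun i j => X i ⟂ᵢ[P] X j) :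
    ∫ ω, (∑ i ∈ s, X i ω) ^ 2 ∂P = (∑ i ∈ s, ∫ ω, X i ω ∂P) ^ 2 + ∑ i ∈ s, Var[X i; P] := by
  rw [← IndepFun.variance_sum hX hindep, variance_eq_sub (memLp_finsetSum' s hX),
    ← integral_finsetSum s fun i hi => (hX i hi).integrable one_le_two]
  simp [Finset.sum_apply]

lemma integral_sq_sum_of_iIndepFun_expMeasure {ι : Type*} [IsProbabilityMeasure P]
    {T : ι → Ω → ℝ} (hT : iIndepFun T P) {s : Finset ι} {r : ι → ℝ}
    (hr : ∀ i ∈ s, 0 < r i) (hlaw : ∀ i ∈ s, HasLaw (T i) (expMeasure (r i)) P) :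
    ∫ ω, (∑ i ∈ s, T i ω) ^ 2 ∂P = (∑ i ∈ s, (r i)⁻¹) ^ 2 + ∑ i ∈ s, (r i ^ 2)⁻¹ := by
  have hmean : ∀ i ∈ s, ∫ ω, T i ω ∂P = (r i)⁻¹ := fun i hi => by
    rw [(hlaw i hi).integral_eq, integral_id_expMeasure (hr i hi)]
  have hvar : ∀ i ∈ s, Var[T i; P] = (r i ^ 2)⁻¹ := fun i hi => by
    rw [(hlaw i hi).variance_eq, variance_id_expMeasure (hr i hi)]
  rw [integral_sq_sum_of_pairwise_indepFun
      (fun i hi => (hlaw i hi).memLp_iff.2 (memLp_id_expMeasure (hr i hi)))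
      fun i _ j _ hij => hT.indepFun hij, sum_congr rfl hmean, sum_congr rfl hvar]

lemma integrable_sq_sum_of_hasLaw_expMeasure {ι : Type*} {T : ι → Ω → ℝ} {s : Finset ι}
    {r : ι → ℝ} (hr : ∀ i ∈ s, 0 < r i) (hlaw : ∀ i ∈ s, HasLaw (T i) (expMeasure (r i)) P) :
    Integrable (fun ω => (∑ i ∈ s, T i ω) ^ 2) P :=
  (memLp_finsetSum s fun i hi =>
    (hlaw i hi).memLp_iff.2 (memLp_id_expMeasure (hr i hi))).integrable_sq

lemma integral_comp_eq_sum_of_indepFun {α β : Type*}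
    [MeasurableSpace α] [MeasurableSingletonClass α] [MeasurableSpace β]
    {κ : Ω → α} {Y : Ω → β} (hκ : Measurable κ) (hY : AEMeasurable Y P) (hindep : κ ⟂ᵢ[P] Y)
    {s : Finset α} (hs : ∀ ω, κ ω ∈ s) {g : α → β → ℝ} (hg : ∀ k, Measurable (g k))
    (hint : ∀ k ∈ s, Integrable (fun ω => g k (Y ω)) P) :
    ∫ ω, g (κ ω) (Y ω) ∂P = ∑ k ∈ s, P.real (κ ⁻¹' {k}) * ∫ ω, g k (Y ω) ∂P := by
  have hsplit : ∀ ω, g (κ ω) (Y ω) = ∑ k ∈ s, (κ ⁻¹' {k}).indicator (fun ω => g k (Y ω)) ω := by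
    intro ω
    rw [Finset.sum_eq_single_of_mem (κ ω) (hs ω) fun k _ hk => ?_]
    · simp
    · simp [Set.indicator_of_notMem, Ne.symm hk]
  have hfiber : ∀ k, MeasurableSet (κ ⁻¹' {k}) := fun k => hκ (measurableSet_singleton k)
  simp_rw [hsplit]
  rw [integral_finsetSum s fun k hk => (hint k hk).indicator (hfiber k)]
  refine Finset.sum_congr rfl fun k _ => ?_
  rw [integral_indicator (hfiber k)]
  exact ((IndepFun_iff_Indep κ Y P).1 hindep).setIntegral_eq_mul hκ.comap_le hY
    ⟨{k}, measurableSet_singleton k, rfl⟩ (hg k).aestronglyMeasurable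

end Independence

lemma sum_Icc_one_sub_sum_Icc_succ {M : Type*} [AddCommGroup M] (f : ℕ → M) {k n : ℕ}
    (hkn : k ≤ n) : ∑ i ∈ Icc 1 n, f i - ∑ i ∈ Icc (k + 1) n, f i = ∑ i ∈ Icc 1 k, f i := by
  have hsplit := sum_Ioc_consecutive f k.zero_le hkn
  simp only [← Icc_add_one_left_eq_Ioc, zero_add] at hsplit
  rw [sub_eq_iff_eq_add, hsplit]

noncomputable def harmonicSum (n r : ℕ) : ℝ := ∑ i ∈ Icc 1 n, 1 / (i : ℝ) ^ r

lemma harmonicSum_succ (n r : ℕ) :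
    harmonicSum (n + 1) r = harmonicSum n r + 1 / ((n : ℝ) + 1) ^ r := by
  rw [harmonicSum, harmonicSum, sum_Icc_succ_top (by omega), Nat.cast_succ]

lemma sum_harmonicSum_div_succ_mul_succ (m : ℕ) :
    ∑ k ∈ Icc 1 m, 1 / (((k : ℝ) + 1) * ((k : ℝ) + 2)) * (harmonicSum k 1 ^ 2 + harmonicSum k 2)
      = ((4 * ((m : ℝ) + 1) + 2) * harmonicSum (m + 1) 2 - 2 * harmonicSum (m + 1) 1 ^ 2
          - 4 * harmonicSum (m + 1) 1) / (2 * ((m : ℝ) + 2)) := by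
  induction m with
  | zero => norm_num [harmonicSum]
  | succ m ih =>
    rw [sum_Icc_succ_top (by omega), ih, harmonicSum_succ (m + 1) 1, harmonicSum_succ (m + 1) 2]
    push_cast
    field_simp
    ring

lemma sum_kappaLaw_mul_harmonicSum {n : ℕ} (hn : 2 ≤ n) :
    ∑ k ∈ Icc 1 (n - 1), 2 * ((n : ℝ) + 1) / ((n : ℝ) - 1) * (1 / (((k : ℝ) + 1) * ((k : ℝ) + 2)))
        * (harmonicSum k 1 ^ 2 + harmonicSum k 2)
      = (4 * (n : ℝ) + 2) / ((n : ℝ) - 1) * harmonicSum n 2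
          - 2 * harmonicSum n 1 ^ 2 / ((n : ℝ) - 1) - 4 * harmonicSum n 1 / ((n : ℝ) - 1) := by
  obtain ⟨m, rfl⟩ : ∃ m, n = m + 1 := ⟨n - 1, by omega⟩
  have hm : (m : ℝ) ≠ 0 := by exact_mod_cast (by omega : m ≠ 0)
  simp_rw [Nat.add_sub_cancel, mul_assoc, ← mul_sum, sum_harmonicSum_div_succ_mul_succ]
  push_cast
  field_simp
  ring

lemma integral_sq_sum_Icc_of_iIndepFun_expMeasure {Ω : Type*} [MeasurableSpace Ω]
    {P : Measure Ω} [IsProbabilityMeasure P] {T : ℕ → Ω → ℝ} (hT : iIndepFun T P) {k : ℕ}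
    (hlaw : ∀ i ∈ Icc 1 k, HasLaw (T i) (expMeasure i) P) :
    ∫ ω, (∑ i ∈ Icc 1 k, T i ω) ^ 2 ∂P = harmonicSum k 1 ^ 2 + harmonicSum k 2 := by
  rw [integral_sq_sum_of_iIndepFun_expMeasure hT
    (fun i hi => Nat.cast_pos.2 (mem_Icc.1 hi).1) hlaw]
  simp [harmonicSum]

theorem second_moment_shared_path
    {Ω : Type*} [MeasurableSpace Ω] {P : Measure Ω} [IsProbabilityMeasure P]
    (n : ℕ) (hn : 2 ≤ n)
    (T : ℕ → Ω → ℝ) (κ : Ω → ℕ)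
    (hTmeas : ∀ i, Measurable (T i)) (hκmeas : Measurable κ)
    (hTindep : iIndepFun T P)
    (hTdist : ∀ i ∈ Finset.Icc 1 n, P.map (T i) = expMeasure i)
    (hκrange : ∀ ω, κ ω ∈ Finset.Icc 1 (n - 1))
    (hκdist : ∀ k ∈ Finset.Icc 1 (n - 1),
      P {ω | κ ω = k} =
        ENNReal.ofReal ((2 * ((n : ℝ) + 1) / ((n : ℝ) - 1)) *
          (1 / (((k : ℝ) + 1) * ((k : ℝ) + 2)))))
    (hindep : IndepFun κ (fun ω i => T i ω) P)
    (H1 H2 : ℝ)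
    (hH1 : H1 = ∑ i ∈ Finset.Icc 1 n, (1 : ℝ) / i)
    (hH2 : H2 = ∑ i ∈ Finset.Icc 1 n, (1 : ℝ) / (i : ℝ) ^ 2) :
    ∫ ω, ((∑ i ∈ Finset.Icc 1 n, T i ω) - ∑ i ∈ Finset.Icc (κ ω + 1) n, T i ω) ^ 2 ∂P =
      (4 * (n : ℝ) + 2) / ((n : ℝ) - 1) * H2 - 2 * H1 ^ 2 / ((n : ℝ) - 1) - 4 * H1 / ((n : ℝ) - 1) := by
  have hlaw : ∀ k ∈ Icc 1 (n - 1), ∀ i ∈ Icc 1 k, HasLaw (T i) (expMeasure i) P :=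
    fun k hk i hi => ⟨(hTmeas i).aemeasurable,
      hTdist i (Icc_subset_Icc_right (by have := mem_Icc.1 hk; omega) hi)⟩
  have hfiber : ∀ k ∈ Icc 1 (n - 1), P.real (κ ⁻¹' {k})
      = 2 * ((n : ℝ) + 1) / ((n : ℝ) - 1) * (1 / (((k : ℝ) + 1) * ((k : ℝ) + 2))) := by
    intro k hk
    have hn1 : (1 : ℝ) < n := by exact_mod_cast hn
    rw [measureReal_def, show κ ⁻¹' {k} = {ω | κ ω = k} from rfl, hκdist k hk,
      ENNReal.toReal_ofReal (mul_nonneg (div_nonneg (by positivity) (by linarith)) (by positivity))]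
  have hshared : ∀ ω, ∑ i ∈ Icc 1 n, T i ω - ∑ i ∈ Icc (κ ω + 1) n, T i ω
      = ∑ i ∈ Icc 1 (κ ω), T i ω := fun ω =>
    sum_Icc_one_sub_sum_Icc_succ _ (by have := mem_Icc.1 (hκrange ω); omega)
  simp_rw [hshared]
  rw [integral_comp_eq_sum_of_indepFun (g := fun k x => (∑ i ∈ Icc 1 k, x i) ^ 2) hκmeas
      (by fun_prop) hindep hκrange (fun k => by fun_prop)
      fun k hk => integrable_sq_sum_of_hasLaw_expMeasure
        (fun i hi => Nat.cast_pos.2 (mem_Icc.1 hi).1) (hlaw k hk),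
    sum_congr rfl fun k hk => by
      rw [hfiber k hk, integral_sq_sum_Icc_of_iIndepFun_expMeasure hTindep (hlaw k hk)],
    sum_kappaLaw_mul_harmonicSum hn, hH1, hH2]
  simp only [harmonicSum, pow_one]
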